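/- If f : X → Y is a relative n-dimensional hypergroupoid of simplicial sets, then the map Dec_+(X) → Dec_+(Y) ×_{Y_0} X_0 (where Y_0, X_0 denote constant simplicial sets and the maps Dec_+ → (-)_0 are the retractions ∂_0^{•+1}) is a trivial relative n-dimensional hypergroupoid. -/

import Mathlib

open CategoryTheory Simplicial CategoryTheory.Limits

namespace DecShift

/-- The underlying function of the shift of a morphism of `SimplexCategory`:
extend by sending the new top element to the new top element. -/
def shiftFun {x y : SimplexCategory} (φ : x ⟶ y) : Fin (x.len + 2) → Fin (y.len + 2) :=
  Fin.lastCases (Fin.last _) (fun i => (φ.toOrderHom i).castSucc)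

lemma shiftFun_castSucc {x y : SimplexCategory} (φ : x ⟶ y) (i : Fin (x.len + 1)) :
    shiftFun φ i.castSucc = (φ.toOrderHom i).castSucc := by
  simp [shiftFun]

lemma shiftFun_last {x y : SimplexCategory} (φ : x ⟶ y) :
    shiftFun φ (Fin.last _) = Fin.last _ := by
  simp [shiftFun]

lemma shiftFun_monotone {x y : SimplexCategory} (φ : x ⟶ y) :
    Monotone (shiftFun φ) := by
  intro i j hij
  induction i using Fin.lastCases with
  | last =>
    have hj : j = Fin.last _ := le_antisymm (Fin.le_last _) hij
    subst hj
    rw [shiftFun_last]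
  | cast i =>
    induction j using Fin.lastCases with
    | last =>
      rw [shiftFun_last]
      exact Fin.le_last _
    | cast j =>
      rw [shiftFun_castSucc, shiftFun_castSucc]
      exact Fin.castSucc_le_castSucc_iff.mpr
        (φ.toOrderHom.monotone (Fin.castSucc_le_castSucc_iff.mp hij))

/-- The shift functor `[n] ↦ [n+1]` on the simplex category. -/
def shiftF : SimplexCategory ⥤ SimplexCategory where
  obj x := SimplexCategory.mk (x.len + 1)
  map φ := SimplexCategory.Hom.mk ⟨shiftFun φ, shiftFun_monotone φ⟩
  map_id := by
    intro x
    apply SimplexCategory.Hom.ext'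
    apply OrderHom.ext
    funext i
    induction i using Fin.lastCases with
    | last =>
      show shiftFun (𝟙 x) (Fin.last (x.len + 1)) = Fin.last (x.len + 1)
      rw [shiftFun_last]
    | cast i =>
      show shiftFun (𝟙 x) i.castSucc = i.castSucc
      rw [shiftFun_castSucc]
      rfl
  map_comp := by
    intro x y z φ ψ
    apply SimplexCategory.Hom.ext'
    apply OrderHom.ext
    funext i
    induction i using Fin.lastCases with
    | last =>
      show shiftFun (φ ≫ ψ) (Fin.last (x.len + 1)) =
        shiftFun ψ (shiftFun φ (Fin.last (x.len + 1)))
      rw [shiftFun_last, shiftFun_last, shiftFun_last]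
    | cast i =>
      show shiftFun (φ ≫ ψ) i.castSucc = shiftFun ψ (shiftFun φ i.castSucc)
      rw [shiftFun_castSucc, shiftFun_castSucc, shiftFun_castSucc]
      rfl

/-- The décalage functor on simplicial sets, `Dec₊(X)_n = X_{n+1}`, forgetting the
last face and degeneracy. -/
def dec : SSet.{0} ⥤ SSet.{0} :=
  (CategoryTheory.Functor.whiskeringLeft _ _ _).obj shiftF.op

/-- The constant simplicial set on the set of `0`-simplices of `X`. -/
def constAt (X : SSet.{0}) : SSet.{0} :=
  (Functor.const SimplexCategoryᵒᵖ).obj (X.obj (Opposite.op (SimplexCategory.mk 0)))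

lemma to0_unique {a : SimplexCategory} (f g : a ⟶ SimplexCategory.mk 0) : f = g := by
  apply SimplexCategory.Hom.ext'
  apply OrderHom.ext
  funext i
  apply Fin.ext
  have h1 := (f.toOrderHom i).isLt
  have h2 := (g.toOrderHom i).isLt
  simp only [SimplexCategory.len_mk] at h1 h2
  omega

/-- The retraction `Dec₊(X) → X_0`, given in level `n` by the iterated face map
`(∂_0)^{n+1} : X_{n+1} → X_0` (evaluation at the last vertex). -/
def rMap (X : SSet.{0}) : dec.obj X ⟶ constAt X where
  app m := X.map (SimplexCategory.const (SimplexCategory.mk 0)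
    (SimplexCategory.mk (m.unop.len + 1)) (Fin.last _)).op
  naturality := by
    intro a b ψ
    show X.map ((shiftF.map ψ.unop).op) ≫ X.map _ = X.map _ ≫ 𝟙 _
    rw [Category.comp_id]
    erw [← X.map_comp]
    apply congrArg X.map
    apply Quiver.Hom.unop_inj
    exact (congrArg (SimplexCategory.const (SimplexCategory.mk 0)
        (SimplexCategory.mk (a.unop.len + 1))) (shiftFun_last ψ.unop))

/-- The map of constant simplicial sets induced by `f` on `0`-simplices. -/
def constMap {X Y : SSet.{0}} (f : X ⟶ Y) : constAt X ⟶ constAt Y where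
  app _ := f.app (Opposite.op (SimplexCategory.mk 0))

lemma rMap_natural {X Y : SSet.{0}} (f : X ⟶ Y) :
    dec.map f ≫ rMap Y = rMap X ≫ constMap f := by
  apply NatTrans.ext
  funext m
  ext x
  exact (NatTrans.naturality_apply f
    (SimplexCategory.const (SimplexCategory.mk 0)
      (SimplexCategory.mk (m.unop.len + 1)) (Fin.last _)).op x).symm

end DecShift

open DecShift

def RelTarget {X Y A B : SSet} (f : X ⟶ Y) (i : A ⟶ B) : Type _ :=
  {p : (A ⟶ X) × (B ⟶ Y) // p.1 ≫ f = i ≫ p.2}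

def relMatch {X Y A B : SSet} (f : X ⟶ Y) (i : A ⟶ B) (g : B ⟶ X) : RelTarget f i :=
  ⟨(i ≫ g, g ≫ f), Category.assoc i g f⟩

/-- A relative `n`-dimensional hypergroupoid: a Kan fibration whose relative partial
matching maps are bijective in all levels `m > n`. -/
def IsRelHypergroupoid (n : ℕ) {X Y : SSet} (f : X ⟶ Y) : Prop :=
  (∀ (m : ℕ) (k : Fin (m + 1)),
      Function.Surjective (relMatch f ((SSet.horn m k).ι))) ∧
    ∀ (m : ℕ) (k : Fin (m + 1)), m > n →
      Function.Bijective (relMatch f ((SSet.horn m k).ι))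

/-- A trivial relative `n`-dimensional hypergroupoid: a trivial Kan fibration whose
relative matching maps are bijective in all levels `m ≥ n`. -/
def IsTrivRelHypergroupoid (n : ℕ) {X Y : SSet} (f : X ⟶ Y) : Prop :=
  (∀ m : ℕ, Function.Surjective (relMatch f ((SSet.boundary m).ι))) ∧
    ∀ m : ℕ, m ≥ n → Function.Bijective (relMatch f ((SSet.boundary m).ι))

/-- The canonical comparison map `Dec₊(X) ⟶ Dec₊(Y) ×_{Y_0} X_0` over the
retractions given by iterated `0`-th face maps. -/
noncomputable def decComparison₀ {X Y : SSet.{0}} (f : X ⟶ Y) :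
    dec.obj X ⟶ pullback (rMap Y) (constMap f) :=
  pullback.lift (dec.map f) (rMap X) (rMap_natural f)

/-!
Since `Dec₊(X)_m = X_{m+1}`, a map `Δ[m] ⟶ Dec₊ X` is a map `Δ[m+1] ⟶ X`. The horn
`Λ[m+1, m+1]` is the cone on `∂Δ[m]` with apex `m+1`: each of its simplices is either
constant at the apex or the image, under a map collapsing its top vertices onto the apex,
of the shift of a simplex of `∂Δ[m]`. Hence a map `Λ[m+1, m+1] ⟶ X` is exactly a map
`∂Δ[m] ⟶ Dec₊ X` all of whose last vertices agree, together with that vertex in `X₀`. So a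
lifting problem for `Dec₊ X ⟶ Dec₊ Y ×_{Y₀} X₀` against `∂Δ[m] ⊆ Δ[m]` is the same as one
for `f` against `Λ[m+1, m+1] ⊆ Δ[m+1]`, and `m ≥ n` gives `m + 1 > n`.
-/

namespace DecShift

open SimplexCategory SSet Opposite Limits Finset

section Combinatorics

variable {x y : SimplexCategory}

lemma shiftFun_eq_last_iff (t : x ⟶ y) (j : Fin (x.len + 2)) :
    shiftFun t j = Fin.last _ ↔ j = Fin.last _ := by
  induction j using Fin.lastCases with
  | last => simp [shiftFun_last]
  | cast i =>
    rw [shiftFun_castSucc]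
    exact ⟨fun h => absurd h (Fin.castSucc_ne_last _), fun h => absurd h (Fin.castSucc_ne_last _)⟩

/-- `shiftF.obj y` is the cone on `y` with apex its last vertex. The vertices of a simplex
lying in the base `y` form an initial segment; this is its length. -/
def baseLength (f : x ⟶ shiftF.obj y) : ℕ :=
  #(univ.filter fun i => f.toOrderHom i ≠ Fin.last _)

lemma lt_baseLength_iff (f : x ⟶ shiftF.obj y) (i : Fin (x.len + 1)) :
    i.1 < baseLength f ↔ f.toOrderHom i ≠ Fin.last _ := by
  have lower : ∀ i j, j ≤ i → f.toOrderHom i ≠ Fin.last _ →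
      f.toOrderHom j ≠ Fin.last _ := fun i j hji hi hj =>
    hi (Fin.last_le_iff.mp (hj ▸ f.toOrderHom.monotone hji))
  constructor
  · intro h hi
    have : univ.filter (fun j => f.toOrderHom j ≠ Fin.last _) ⊆ Iio i :=
      fun j hj => mem_Iio.mpr (lt_of_not_ge fun hij => lower j i hij (mem_filter.mp hj).2 hi)
    have := card_le_card this
    rw [Fin.card_Iio] at this
    exact absurd h (not_lt.mpr this)
  · intro hi
    have : Iic i ⊆ univ.filter (fun j => f.toOrderHom j ≠ Fin.last _) :=
      fun j hj => mem_filter.mpr ⟨mem_univ _, lower i j (mem_Iic.mp hj) hi⟩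
    have := card_le_card this
    rw [Fin.card_Iic] at this
    exact Nat.lt_of_succ_le this

lemma baseLength_le (f : x ⟶ shiftF.obj y) : baseLength f ≤ x.len + 1 :=
  (card_filter_le _ _).trans_eq (card_fin _)

lemma baseLength_eq_zero_iff (f : x ⟶ shiftF.obj y) :
    baseLength f = 0 ↔ ∀ i, f.toOrderHom i = Fin.last _ := by
  simp [baseLength, filter_eq_empty_iff]

lemma baseLength_comp_shiftF_map {z : SimplexCategory} (s : x ⟶ shiftF.obj z) (t : z ⟶ y) :
    baseLength (s ≫ shiftF.map t) = baseLength s := by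
  simp only [baseLength]
  congr 1
  ext i
  simp only [mem_filter, mem_univ, true_and]
  exact (shiftFun_eq_last_iff t _).not

def basePart (f : x ⟶ shiftF.obj y) (c : ℕ) (hc : baseLength f = c + 1) : ⦋c⦌ ⟶ y :=
  Hom.mk
    { toFun i := (f.toOrderHom (Fin.castLE (hc ▸ baseLength_le f) i)).castPred
        ((lt_baseLength_iff f _).mp (lt_of_lt_of_eq i.isLt hc.symm))
      monotone' _ _ hij := Fin.castPred_le_castPred_iff.mpr
        (f.toOrderHom.monotone ((Fin.castLE_le_castLE_iff _).mpr hij)) }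

lemma castSucc_basePart (f : x ⟶ shiftF.obj y) (c : ℕ) (hc : baseLength f = c + 1)
    (i : Fin (c + 1)) :
    ((basePart f c hc).toOrderHom i).castSucc =
      f.toOrderHom (Fin.castLE (hc ▸ baseLength_le f) i) :=
  Fin.castSucc_castPred _ ((lt_baseLength_iff f _).mp (lt_of_lt_of_eq i.isLt hc.symm))

def collapse (x : SimplexCategory) (c : ℕ) : x ⟶ shiftF.obj ⦋c⦌ :=
  Hom.mk ⟨fun i => ⟨min i (c + 1), Nat.lt_succ_of_le (min_le_right _ _)⟩,
    fun _ _ hij => Fin.mk_le_mk.mpr (min_le_min_right _ hij)⟩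

lemma collapse_comp_shiftF_map_basePart (f : x ⟶ shiftF.obj y) (c : ℕ)
    (hc : baseLength f = c + 1) :
    collapse x c ≫ shiftF.map (basePart f c hc) = f := by
  ext i : 3
  change shiftFun (basePart f c hc) ((collapse x c).toOrderHom i) = f.toOrderHom i
  by_cases hi : i.1 < c + 1
  · have : (collapse x c).toOrderHom i = Fin.castSucc ⟨i, hi⟩ :=
      Fin.ext (min_eq_left hi.le)
    rw [this, shiftFun_castSucc, castSucc_basePart]
    rfl
  · have : (collapse x c).toOrderHom i = Fin.last (c + 1) := Fin.ext (min_eq_right (by omega))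
    rw [this]
    exact (shiftFun_last _).trans (not_not.mp ((lt_baseLength_iff f i).not.mp (by omega))).symm

lemma basePart_eq_basePart_comp {z : SimplexCategory} {d : ℕ} {f : x ⟶ shiftF.obj y}
    {s : x ⟶ shiftF.obj z} {t : z ⟶ y} (hf : s ≫ shiftF.map t = f)
    (hd : baseLength f = d + 1) (hd' : baseLength s = d + 1) :
    basePart f d hd = basePart s d hd' ≫ t := by
  subst hf
  ext i : 3
  apply Fin.castSucc_injective
  rw [castSucc_basePart]
  change shiftFun t (s.toOrderHom _) = ((t.toOrderHom) ((basePart s d hd').toOrderHom i)).castSucc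
  rw [← castSucc_basePart s d hd', shiftFun_castSucc]

end Combinatorics

section Horn

variable {m : ℕ}

lemma exists_castSucc_notMem_range_of_mem_horn {a : SimplexCategoryᵒᵖ} {y : Δ[m + 1].obj a}
    (hy : y ∈ (horn (m + 1) (Fin.last (m + 1))).obj a) :
    ∃ j : Fin (m + 1), ∀ i, y.down.toOrderHom i ≠ j.castSucc := by
  obtain ⟨z, hz⟩ := Set.ne_univ_iff_exists_notMem _ |>.mp hy
  simp only [Set.mem_union, Set.mem_range, Set.mem_singleton_iff, not_or, not_exists] at hz
  exact ⟨z.castPred hz.2, fun i hi => hz.1 i (hi.trans (Fin.castSucc_castPred _ _))⟩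

def baseSimplex {a : SimplexCategoryᵒᵖ} (β : (Λ[m + 1, Fin.last (m + 1)] : SSet).obj a)
    (c : ℕ) (hc : baseLength (y := ⦋m⦌) β.1.down = c + 1) :
    (∂Δ[m] : SSet).obj (op ⦋c⦌) :=
  ⟨ULift.up (basePart β.1.down c hc), fun hsurj => by
    obtain ⟨j, hj⟩ := exists_castSucc_notMem_range_of_mem_horn β.2
    obtain ⟨i, hi⟩ := hsurj j
    exact hj _ ((castSucc_basePart _ c hc i).symm.trans (congrArg Fin.castSucc hi))⟩

def shiftSimplex {a : SimplexCategoryᵒᵖ} (α : (∂Δ[m] : SSet).obj a) :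
    (Λ[m + 1, Fin.last (m + 1)] : SSet).obj (op (shiftF.obj a.unop)) :=
  ⟨ULift.up (shiftF.map α.1.down), by
    obtain ⟨j, hj⟩ := not_forall.mp α.2
    refine Set.ne_univ_iff_exists_notMem _ |>.mpr ⟨j.castSucc, ?_⟩
    rintro (⟨i, hi⟩ | hi)
    · induction i using Fin.lastCases with
      | last => exact Fin.castSucc_ne_last j ((shiftFun_last _).symm.trans hi).symm
      | cast i => exact hj ⟨i, Fin.castSucc_injective _ ((shiftFun_castSucc _ i).symm.trans hi)⟩
    · exact Fin.castSucc_ne_last j hi⟩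

def apexVertex : (Λ[m + 1, Fin.last (m + 1)] : SSet).obj (op ⦋0⦌) :=
  ⟨ULift.up (const ⦋0⦌ ⦋m + 1⦌ (Fin.last _)), by
    refine Set.ne_univ_iff_exists_notMem _ |>.mpr ⟨Fin.castSucc 0, ?_⟩
    rintro (⟨i, hi⟩ | hi)
    · exact Fin.castSucc_ne_last 0 hi.symm
    · exact Fin.castSucc_ne_last 0 hi⟩

lemma map_collapse_shiftSimplex_baseSimplex {a : SimplexCategoryᵒᵖ}
    (β : (Λ[m + 1, Fin.last (m + 1)] : SSet).obj a) (c : ℕ)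
    (hc : baseLength (y := ⦋m⦌) β.1.down = c + 1) :
    (Λ[m + 1, Fin.last (m + 1)] : SSet).map (collapse a.unop c).op
      (shiftSimplex (baseSimplex β c hc)) = β :=
  Subtype.ext (congrArg ULift.up (collapse_comp_shiftF_map_basePart _ c hc))

lemma map_const_apexVertex {a : SimplexCategoryᵒᵖ}
    (β : (Λ[m + 1, Fin.last (m + 1)] : SSet).obj a)
    (hc : baseLength (y := ⦋m⦌) β.1.down = 0) :
    (Λ[m + 1, Fin.last (m + 1)] : SSet).map (const a.unop ⦋0⦌ 0).op apexVertex = β := by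
  refine Subtype.ext (congrArg ULift.up (Hom.ext _ _ (OrderHom.ext _ _ (funext fun i => ?_))))
  exact ((baseLength_eq_zero_iff _).mp hc i).symm

lemma hornLast_hom_ext {X : SSet.{0}} {h₁ h₂ : (Λ[m + 1, Fin.last (m + 1)] : SSet) ⟶ X}
    (hshift : ∀ (a : SimplexCategoryᵒᵖ) (α : (∂Δ[m] : SSet).obj a),
      h₁.app _ (shiftSimplex α) = h₂.app _ (shiftSimplex α))
    (hapex : h₁.app _ apexVertex = h₂.app _ apexVertex) : h₁ = h₂ := by
  refine SSet.hom_ext fun a => ConcreteCategory.hom_ext _ _ fun β => ?_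
  cases hc : baseLength (y := ⦋m⦌) β.1.down with
  | zero =>
    rw [← map_const_apexVertex β hc, NatTrans.naturality_apply, NatTrans.naturality_apply,
      hapex]
  | succ c =>
    rw [← map_collapse_shiftSimplex_baseSimplex β c hc, NatTrans.naturality_apply,
      NatTrans.naturality_apply, hshift]

end Horn

section HornLift

variable {m : ℕ} {X : SSet.{0}} (u : (∂Δ[m] : SSet) ⟶ dec.obj X) (x₀ : X.obj (op ⦋0⦌))

noncomputable def hornLiftApp {a : SimplexCategoryᵒᵖ}
    (β : (Λ[m + 1, Fin.last (m + 1)] : SSet).obj a) : X.obj a :=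
  match h : baseLength (y := ⦋m⦌) β.1.down with
  | 0 => X.map (const a.unop ⦋0⦌ 0).op x₀
  | c + 1 => X.map (collapse a.unop c).op (u.app _ (baseSimplex β c h))

lemma hornLiftApp_of_baseLength_eq_zero {a : SimplexCategoryᵒᵖ}
    (β : (Λ[m + 1, Fin.last (m + 1)] : SSet).obj a) (hc : baseLength (y := ⦋m⦌) β.1.down = 0) :
    hornLiftApp u x₀ β = X.map (const a.unop ⦋0⦌ 0).op x₀ := by
  unfold hornLiftApp
  split
  · rfl
  · omega

lemma hornLiftApp_of_baseLength_eq_succ {a : SimplexCategoryᵒᵖ}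
    (β : (Λ[m + 1, Fin.last (m + 1)] : SSet).obj a) (c : ℕ)
    (hc : baseLength (y := ⦋m⦌) β.1.down = c + 1) :
    hornLiftApp u x₀ β = X.map (collapse a.unop c).op (u.app _ (baseSimplex β c hc)) := by
  unfold hornLiftApp
  split
  · omega
  · rename_i c' hc'
    obtain rfl : c' = c := by omega
    rfl

variable {x₀} (hu : ∀ (b : SimplexCategoryᵒᵖ) (α : (∂Δ[m] : SSet).obj b),
  (rMap X).app b (u.app b α) = x₀)
include hu

lemma hornLiftApp_eq_map {a b : SimplexCategoryᵒᵖ}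
    (β : (Λ[m + 1, Fin.last (m + 1)] : SSet).obj a) (α : (∂Δ[m] : SSet).obj b)
    (s : a.unop ⟶ shiftF.obj b.unop) (hs : s ≫ shiftF.map α.1.down = β.1.down) :
    hornLiftApp u x₀ β = X.map s.op (u.app b α) := by
  have hs' : baseLength s = baseLength (y := ⦋m⦌) β.1.down :=
    (baseLength_comp_shiftF_map s α.1.down).symm.trans (congrArg _ hs)
  cases hc : baseLength (y := ⦋m⦌) β.1.down with
  | zero =>
    have hconst : s = const a.unop ⦋0⦌ 0 ≫ const ⦋0⦌ _ (Fin.last _) :=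
      Hom.ext _ _ (OrderHom.ext _ _ (funext ((baseLength_eq_zero_iff s).mp (hs'.trans hc))))
    rw [hornLiftApp_of_baseLength_eq_zero u x₀ β hc, hconst, ← hu b α]
    exact (Functor.map_comp_apply X _ _ _).symm
  | succ c =>
    have hbase : baseSimplex β c hc =
        (∂Δ[m] : SSet).map (basePart s c (hs'.trans hc)).op α :=
      Subtype.ext (congrArg ULift.up (basePart_eq_basePart_comp hs _ (hs'.trans hc)))
    rw [hornLiftApp_of_baseLength_eq_succ u x₀ β c hc, hbase, NatTrans.naturality_apply]
    refine (Functor.map_comp_apply X (shiftF.map _).op _ _).symm.trans ?_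
    exact congrArg (fun g => X.map (Quiver.Hom.op g) (u.app b α))
      (collapse_comp_shiftF_map_basePart s c (hs'.trans hc))

lemma hornLiftApp_map {a b : SimplexCategoryᵒᵖ} (ψ : a ⟶ b)
    (β : (Λ[m + 1, Fin.last (m + 1)] : SSet).obj a) :
    hornLiftApp u x₀ ((Λ[m + 1, Fin.last (m + 1)] : SSet).map ψ β) =
      X.map ψ (hornLiftApp u x₀ β) := by
  cases hc : baseLength (y := ⦋m⦌) β.1.down with
  | zero =>
    have hc' : baseLength (y := ⦋m⦌) ((Λ[m + 1, Fin.last (m + 1)] : SSet).map ψ β).1.down = 0 :=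
      (baseLength_eq_zero_iff _).mpr fun i => (baseLength_eq_zero_iff _).mp hc _
    rw [hornLiftApp_of_baseLength_eq_zero u x₀ _ hc', hornLiftApp_of_baseLength_eq_zero u x₀ β hc,
      ← Functor.map_comp_apply]
    exact congrArg (fun g : b.unop ⟶ ⦋0⦌ => X.map g.op x₀) (to0_unique _ _)
  | succ c =>
    rw [hornLiftApp_of_baseLength_eq_succ u x₀ β c hc,
      hornLiftApp_eq_map u hu _ (baseSimplex β c hc) (ψ.unop ≫ collapse a.unop c)]
    · exact Functor.map_comp_apply X _ _ _
    · exact congrArg (ψ.unop ≫ ·) (collapse_comp_shiftF_map_basePart _ c hc)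

noncomputable def hornLift : (Λ[m + 1, Fin.last (m + 1)] : SSet) ⟶ X where
  app a := TypeCat.ofHom (hornLiftApp u x₀)
  naturality a b ψ := by
    ext β
    exact hornLiftApp_map u hu ψ β

lemma hornLift_app_shiftSimplex {a : SimplexCategoryᵒᵖ} (α : (∂Δ[m] : SSet).obj a) :
    (hornLift u hu).app _ (shiftSimplex α) = u.app a α :=
  (hornLiftApp_eq_map u hu (shiftSimplex α) α (𝟙 _) (Category.id_comp _)).trans
    (Functor.map_id_apply X _ _)

lemma hornLift_app_apexVertex : (hornLift u hu).app _ apexVertex = x₀ := by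
  refine (hornLiftApp_of_baseLength_eq_zero u x₀ apexVertex
    ((baseLength_eq_zero_iff _).mpr fun _ => rfl)).trans ?_
  rw [to0_unique (const ⦋0⦌ ⦋0⦌ 0) (𝟙 _)]
  exact Functor.map_id_apply X _ _

end HornLift

lemma relMatch_eq_relMatch_iff {X Y A B : SSet} (f : X ⟶ Y) (i : A ⟶ B) (g₁ g₂ : B ⟶ X) :
    relMatch f i g₁ = relMatch f i g₂ ↔ i ≫ g₁ = i ≫ g₂ ∧ g₁ ≫ f = g₂ ≫ f :=
  ⟨fun h => Prod.ext_iff.mp (congrArg Subtype.val h), fun h => Subtype.ext (Prod.ext h.1 h.2)⟩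

lemma relMatch_eq_mk_iff {X Y A B : SSet} (f : X ⟶ Y) (i : A ⟶ B) (g : B ⟶ X) (u : A ⟶ X)
    (v : B ⟶ Y) (h : u ≫ f = i ≫ v) :
    relMatch f i g = ⟨(u, v), h⟩ ↔ i ≫ g = u ∧ g ≫ f = v :=
  ⟨fun h => Prod.ext_iff.mp (congrArg Subtype.val h), fun h => Subtype.ext (Prod.ext h.1 h.2)⟩

section Transfer

variable {m : ℕ} {X : SSet.{0}}

lemma app_eq_map_yonedaEquiv {n : ℕ} {Z : SSet} (g : Δ[n] ⟶ Z)
    {a : SimplexCategoryᵒᵖ} (α : Δ[n].obj a) : g.app a α = Z.map α.down.op (yonedaEquiv g) := by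
  rw [yonedaEquiv_naturality, yonedaEquiv_comp, yonedaEquiv_map]
  rfl

noncomputable def decYonedaEquiv : (Δ[m + 1] ⟶ X) ≃ (Δ[m] ⟶ dec.obj X) :=
  SSet.yonedaEquiv.trans (SSet.yonedaEquiv (X := dec.obj X) (n := ⦋m⦌)).symm

lemma yonedaEquiv_decYonedaEquiv (k : Δ[m + 1] ⟶ X) :
    SSet.yonedaEquiv (decYonedaEquiv k) = SSet.yonedaEquiv k :=
  Equiv.apply_symm_apply _ _

lemma decYonedaEquiv_comp {Y : SSet.{0}} (k : Δ[m + 1] ⟶ X) (f : X ⟶ Y) :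
    decYonedaEquiv (k ≫ f) = decYonedaEquiv k ≫ dec.map f := by
  apply SSet.yonedaEquiv.injective
  rw [yonedaEquiv_comp, yonedaEquiv_decYonedaEquiv, yonedaEquiv_decYonedaEquiv]
  rfl

lemma boundary_ι_comp_decYonedaEquiv_app (k : Δ[m + 1] ⟶ X) {a : SimplexCategoryᵒᵖ}
    (α : (∂Δ[m] : SSet).obj a) :
    ((∂Δ[m]).ι ≫ decYonedaEquiv k).app a α =
      ((Λ[m + 1, Fin.last (m + 1)]).ι ≫ k).app _ (shiftSimplex α) :=
  (NatTrans.naturality_apply k (shiftF.map α.1.down).op _).symm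

lemma yonedaEquiv_decYonedaEquiv_comp_rMap (k : Δ[m + 1] ⟶ X) :
    SSet.yonedaEquiv (decYonedaEquiv k ≫ rMap X) =
      ((Λ[m + 1, Fin.last (m + 1)]).ι ≫ k).app _ apexVertex := by
  rw [yonedaEquiv_comp, yonedaEquiv_decYonedaEquiv]
  exact (app_eq_map_yonedaEquiv k apexVertex.1).symm

end Transfer

section Comparison

variable {X Y : SSet.{0}} (f : X ⟶ Y) (m : ℕ)

@[simp]
lemma decComparison₀_fst : decComparison₀ f ≫ pullback.fst _ _ = dec.map f :=
  pullback.lift_fst _ _ _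

@[simp]
lemma decComparison₀_snd : decComparison₀ f ≫ pullback.snd _ _ = rMap X :=
  pullback.lift_snd _ _ _

theorem injective_relMatch_decComparison₀
    (hf : Function.Injective (relMatch f (Λ[m + 1, Fin.last (m + 1)]).ι)) :
    Function.Injective (relMatch (decComparison₀ f) (∂Δ[m]).ι) := by
  intro g₁ g₂ h
  obtain ⟨k₁, rfl⟩ := decYonedaEquiv.surjective g₁
  obtain ⟨k₂, rfl⟩ := decYonedaEquiv.surjective g₂
  obtain ⟨hbd, hcomp⟩ := (relMatch_eq_relMatch_iff _ _ _ _).mp h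
  have hfst := hcomp =≫ pullback.fst _ _
  have hsnd := hcomp =≫ pullback.snd _ _
  simp only [Category.assoc, decComparison₀_fst, decComparison₀_snd] at hfst hsnd
  refine congrArg _ (hf ((relMatch_eq_relMatch_iff _ _ _ _).mpr
    ⟨hornLast_hom_ext (fun a α => ?_) ?_, decYonedaEquiv.injective ?_⟩))
  · rw [← boundary_ι_comp_decYonedaEquiv_app, ← boundary_ι_comp_decYonedaEquiv_app, hbd]
  · rw [← yonedaEquiv_decYonedaEquiv_comp_rMap, ← yonedaEquiv_decYonedaEquiv_comp_rMap, hsnd]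
  · rw [decYonedaEquiv_comp, decYonedaEquiv_comp, hfst]

theorem surjective_relMatch_decComparison₀
    (hf : Function.Surjective (relMatch f (Λ[m + 1, Fin.last (m + 1)]).ι)) :
    Function.Surjective (relMatch (decComparison₀ f) (∂Δ[m]).ι) := by
  rintro ⟨⟨u, v⟩, huv⟩
  have hfst : u ≫ dec.map f = (∂Δ[m]).ι ≫ v ≫ pullback.fst _ _ := by
    simpa only [Category.assoc, decComparison₀_fst] using huv =≫ pullback.fst _ _
  have hsnd : u ≫ rMap X = (∂Δ[m]).ι ≫ v ≫ pullback.snd _ _ := by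
    simpa only [Category.assoc, decComparison₀_snd] using huv =≫ pullback.snd _ _
  set x₀ := SSet.yonedaEquiv (v ≫ pullback.snd _ _)
  have hu : ∀ b α, (rMap X).app b (u.app b α) = x₀ := fun b α =>
    (congrArg (fun g => g.app b α) hsnd).trans (app_eq_map_yonedaEquiv (v ≫ pullback.snd _ _) α.1)
  obtain ⟨v', hv'⟩ := decYonedaEquiv.surjective (v ≫ pullback.fst _ _)
  have hlift : hornLift u hu ≫ f = (Λ[m + 1, Fin.last (m + 1)]).ι ≫ v' := by
    refine hornLast_hom_ext (fun a α => ?_) ?_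
    · rw [← boundary_ι_comp_decYonedaEquiv_app, hv']
      refine (congrArg (f.app _) (hornLift_app_shiftSimplex u hu α)).trans ?_
      exact congrArg (fun g => g.app a α) hfst
    · rw [← yonedaEquiv_decYonedaEquiv_comp_rMap, hv', Category.assoc, pullback.condition]
      exact congrArg (f.app _) (hornLift_app_apexVertex u hu)
  obtain ⟨k, hk⟩ := hf ⟨(hornLift u hu, v'), hlift⟩
  obtain ⟨hkH, hkf⟩ := (relMatch_eq_mk_iff _ _ _ _ _ _).mp hk
  refine ⟨decYonedaEquiv k, (relMatch_eq_mk_iff _ _ _ _ _ _).mpr ⟨?_, ?_⟩⟩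
  · refine SSet.hom_ext fun a => ConcreteCategory.hom_ext _ _ fun α => ?_
    rw [boundary_ι_comp_decYonedaEquiv_app, hkH]
    exact hornLift_app_shiftSimplex u hu α
  · apply pullback.hom_ext
    · rw [Category.assoc, decComparison₀_fst, ← decYonedaEquiv_comp, hkf, hv']
    · apply SSet.yonedaEquiv.injective
      rw [Category.assoc, decComparison₀_snd, yonedaEquiv_decYonedaEquiv_comp_rMap, hkH]
      exact hornLift_app_apexVertex u hu

end Comparison

end DecShift

/-- If `f : X → Y` is a relative `n`-dimensional hypergroupoid, then the map
`Dec₊(X) → Dec₊(Y) ×_{Y_0} X_0` (where `X_0`, `Y_0` are constant simplicial sets and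
the maps `Dec₊ → (-)_0` are the retractions by iterated `0`-th faces) is a trivial
relative `n`-dimensional hypergroupoid. -/
theorem stmt14 (n : ℕ) {X Y : SSet.{0}} (f : X ⟶ Y)
    (hf : IsRelHypergroupoid n f) :
    IsTrivRelHypergroupoid n (decComparison₀ f) :=
  ⟨fun m => surjective_relMatch_decComparison₀ f m (hf.1 (m + 1) (Fin.last (m + 1))),
    fun m hm => ⟨injective_relMatch_decComparison₀ f m (hf.2 (m + 1) _ (by omega)).1,
      surjective_relMatch_decComparison₀ f m (hf.1 (m + 1) (Fin.last (m + 1)))⟩⟩
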